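/- arXiv:1005.0399 — 2 statements merged into one kernel-verified Lean document; each statement's English description precedes it below -/
import Mathlib

section
/- Let S = {p_n} and T = {q_n} be dynamically generating sequences in the unit ball of C_ℝ(X). Then h_Σ(T) = h_Σ(S). -/
open MeasureTheory Filter
open scoped ENNReal ComplexOrder

noncomputable section

namespace Sofic

/-- The ℓ²-norm on `ℂ^d` with respect to the uniform probability measure `ζ`. -/
def l2 (d : ℕ) (v : Fin d → ℂ) : ℝ :=
  Real.sqrt ((∑ k, ‖v k‖ ^ 2) / d)

/-- The sup-norm on `ℂ^d`. -/
def linf (d : ℕ) (v : Fin d → ℂ) : ℝ := ⨆ k, ‖v k‖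

/-- The uniform probability state `ζ` on `ℂ^d`. -/
def unif (d : ℕ) (v : Fin d → ℂ) : ℂ := (∑ k, v k) / d

/-- The induced action of a permutation of `{1,…,d}` on `ℂ^d`: `σ_s(f) = f ∘ σ_s⁻¹`. -/
def permAct {d : ℕ} (π : Equiv.Perm (Fin d)) (v : Fin d → ℂ) : Fin d → ℂ :=
  fun k => v (π⁻¹ k)

/-- `N_ε(S,ρ)`: the maximal cardinality of a finite `ε`-separated subset of `S` with
respect to the pseudometric `ρ`.  (For `ε = 0` this is the cardinality modulo the relation
of zero distance.) -/
def sepNum {Y : Type*} (S : Set Y) (ρ : Y → Y → ℝ) (ε : ℝ) : ℕ∞ :=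
  ⨆ t ∈ {t : Finset Y | ↑t ⊆ S ∧ ∀ x ∈ t, ∀ y ∈ t, x ≠ y → ε < ρ x y}, (t.card : ℕ∞)

/-- Extended logarithm of an extended natural number: `log 0 = -∞`, `log ∞ = ∞`. -/
def elog (n : ℕ∞) : EReal :=
  if n = ⊤ then (⊤ : EReal) else if n = 0 then (⊥ : EReal)
  else ((Real.log n.toNat : ℝ) : EReal)

/-- A sofic approximation sequence `Σ = {σ_i : G → Sym(d_i)}` for a countable group `G`. -/
structure SoficApprox (G : Type*) [Group G] where
  d : ℕ → ℕ
  σ : ∀ i, G → Equiv.Perm (Fin (d i))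
  d_pos : ∀ i, 0 < d i
  d_tendsto : Tendsto d atTop atTop
  approx_mul : ∀ s t : G, Tendsto
    (fun i => (({k : Fin (d i) | σ i (s * t) k = σ i s (σ i t k)} : Set (Fin (d i))).ncard : ℝ)
      / d i) atTop (nhds 1)
  approx_free : ∀ s t : G, s ≠ t → Tendsto
    (fun i => (({k : Fin (d i) | σ i s k ≠ σ i t k} : Set (Fin (d i))).ncard : ℝ)
      / d i) atTop (nhds 1)

/-- A countable group is sofic if it admits a sofic approximation sequence. -/
def IsSofic (G : Type*) [Group G] : Prop := Nonempty (SoficApprox G)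

variable {G : Type*} [Group G] {X : Type*} [TopologicalSpace X]

/-- The action `α_s(f) = f ∘ s⁻¹` of `G` on `C(X)` induced by a continuous action `T` of
`G` on `X`. -/
def alphaC (T : G → X → X) (hc : ∀ s, Continuous (T s)) (s : G) (f : C(X, ℂ)) : C(X, ℂ) :=
  f.comp ⟨T s⁻¹, hc s⁻¹⟩

/-- A real-valued continuous function viewed as an element of `C(X,ℂ)`. -/
def cplx (f : C(X, ℝ)) : C(X, ℂ) :=
  ⟨fun x => (f x : ℂ), Complex.continuous_ofReal.comp f.continuous⟩

/-- The pseudometric `ρ_S` on unital homomorphisms `C(X) → ℂ^d` associated to a sequence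
`S = {p_n}_{n≥1}` in the unit ball of `C_ℝ(X)` (here `p n` is `p_{n+1}`). -/
def rhoSeqC {d : ℕ} (p : ℕ → C(X, ℝ)) (φ ψ : C(X, ℂ) →ₐ[ℂ] (Fin d → ℂ)) : ℝ :=
  ∑' n : ℕ, (1 / 2) ^ (n + 1) * l2 d (φ (cplx (p n)) - ψ (cplx (p n)))

/-- `Hom(S,F,δ,σ)` (Definition 4.1): unital homomorphisms `φ : C(X) → ℂ^d` such that
`Σ_n 2^{-n} ‖φ(α_s(p_n)) − σ_s(φ(p_n))‖₂ < δ` for all `s ∈ F`. -/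
def HomTop (T : G → X → X) (hc : ∀ s, Continuous (T s)) (p : ℕ → C(X, ℝ))
    (F : Finset G) (δ : ℝ) {d : ℕ} (σ : G → Equiv.Perm (Fin d)) :
    Set (C(X, ℂ) →ₐ[ℂ] (Fin d → ℂ)) :=
  {φ | ∀ s ∈ F,
    ∑' n : ℕ, (1 / 2) ^ (n + 1) *
      l2 d (φ (alphaC T hc s (cplx (p n))) - permAct (σ s) (φ (cplx (p n)))) < δ}

/-- The topological entropy `h_Σ(S)` of a sequence `S` in the unit ball of `C_ℝ(X)`
(Definition 4.2). -/
def hTop (T : G → X → X) (hc : ∀ s, Continuous (T s)) (SA : SoficApprox G)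
    (p : ℕ → C(X, ℝ)) : EReal :=
  ⨆ ε : {ε : ℝ // 0 < ε}, ⨅ F : {F : Finset G // F.Nonempty}, ⨅ δ : {δ : ℝ // 0 < δ},
    limsup (fun i => ((((SA.d i : ℝ))⁻¹ : ℝ) : EReal) *
      elog (sepNum (HomTop T hc p (F : Finset G) (δ : ℝ) (SA.σ i)) (rhoSeqC p) (ε : ℝ)))
      atTop

/-- A sequence in the unit ball of `C_ℝ(X)` is dynamically generating if it is not
contained in any proper `G`-invariant closed unital *-subalgebra of `C(X)`. -/
def DynGenTop (T : G → X → X) (hc : ∀ s, Continuous (T s)) (p : ℕ → C(X, ℝ)) : Prop :=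
  ∀ A : StarSubalgebra ℂ C(X, ℂ), IsClosed (A : Set C(X, ℂ)) →
    (∀ (s : G) f, f ∈ A → alphaC T hc s f ∈ A) → (∀ n, cplx (p n) ∈ A) → A = ⊤

/-!
By symmetry it suffices to prove `h_Σ(T) ≤ h_Σ(S)`. Since `S` is dynamically generating, the
translates `α_t p_n` generate a dense subalgebra of `C(X)`, and a polynomial in finitely many of
them is Lipschitz in `‖·‖₂` with respect to any pair of unital homomorphisms `C(X) → ℂ^d`,
uniformly in `d`, because the coordinates of such homomorphisms are contractive. Applied to pairs
`(φ, ψ)`, this makes `ρ_T(φ, ψ)` small as soon as `ρ_S(φ, ψ)` and the equivariance defects of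
`φ, ψ` are. Applied to the pairs `(φ ∘ α_s, σ_s ∘ φ)`, together with the asymptotic
multiplicativity of `Σ`, it gives `Hom(T, F, δ, σ_i) ⊆ Hom(S, F', δ', σ_i)` for suitable `F, δ`
and all large `i`. Hence `ε`-separated sets for `ρ_T` are `ε'`-separated sets for `ρ_S`.
-/

section L2

variable {d : ℕ}

lemma l2_nonneg (v : Fin d → ℂ) : 0 ≤ l2 d v := Real.sqrt_nonneg _

@[simp] lemma l2_zero : l2 d 0 = 0 := by simp [l2]

lemma l2_eq_norm (v : Fin d → ℂ) : l2 d v = Real.sqrt (d : ℝ)⁻¹ * ‖WithLp.toLp 2 v‖ := by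
  rw [EuclideanSpace.norm_eq, l2, div_eq_mul_inv, Real.sqrt_mul (by positivity), mul_comm]

lemma l2_add_le (v w : Fin d → ℂ) : l2 d (v + w) ≤ l2 d v + l2 d w := by
  rw [l2_eq_norm, l2_eq_norm, l2_eq_norm, ← mul_add, WithLp.toLp_add]
  exact mul_le_mul_of_nonneg_left (norm_add_le _ _) (Real.sqrt_nonneg _)

lemma l2_sub_le (v w : Fin d → ℂ) : l2 d (v - w) ≤ l2 d v + l2 d w := by
  rw [l2_eq_norm, l2_eq_norm, l2_eq_norm, ← mul_add, WithLp.toLp_sub]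
  exact mul_le_mul_of_nonneg_left (norm_sub_le _ _) (Real.sqrt_nonneg _)

lemma l2_smul (a : ℂ) (v : Fin d → ℂ) : l2 d (a • v) = ‖a‖ * l2 d v := by
  rw [l2_eq_norm, l2_eq_norm, WithLp.toLp_smul, norm_smul]
  ring

lemma l2_mono {v w : Fin d → ℂ} (h : ∀ k, ‖v k‖ ≤ ‖w k‖) : l2 d v ≤ l2 d w := by
  unfold l2
  gcongr with k
  exact h k

lemma l2_mul_le {v w : Fin d → ℂ} {B : ℝ} (hB : 0 ≤ B) (hv : ∀ k, ‖v k‖ ≤ B) :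
    l2 d (v * w) ≤ B * l2 d w := by
  calc l2 d (v * w) ≤ l2 d ((B : ℂ) • w) := l2_mono fun k => by
        rw [Pi.mul_apply, Pi.smul_apply, norm_mul, norm_smul, Complex.norm_real,
          Real.norm_of_nonneg hB]
        exact mul_le_mul_of_nonneg_right (hv k) (norm_nonneg _)
    _ = B * l2 d w := by rw [l2_smul, Complex.norm_real, Real.norm_of_nonneg hB]

lemma l2_le_of_forall_norm_le {v : Fin d → ℂ} {B : ℝ} (hB : 0 ≤ B) (hv : ∀ k, ‖v k‖ ≤ B) :
    l2 d v ≤ B := by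
  calc l2 d v ≤ l2 d (fun _ => (B : ℂ)) := l2_mono fun k => by
        rw [Complex.norm_real, Real.norm_of_nonneg hB]
        exact hv k
    _ ≤ Real.sqrt (B ^ 2) := by
        unfold l2
        gcongr
        simp only [Complex.norm_real, Real.norm_of_nonneg hB, Finset.sum_const, Finset.card_univ,
          Fintype.card_fin, nsmul_eq_mul]
        exact div_le_of_le_mul₀ (Nat.cast_nonneg _) (sq_nonneg _) (mul_comm _ _).le
    _ = B := Real.sqrt_sq hB

def permAlgHom (π : Equiv.Perm (Fin d)) : (Fin d → ℂ) →ₐ[ℂ] (Fin d → ℂ) :=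
  AlgHom.pi fun k => Pi.evalAlgHom ℂ (fun _ => ℂ) (π⁻¹ k)

@[simp] lemma permAlgHom_apply (π : Equiv.Perm (Fin d)) (v : Fin d → ℂ) :
    permAlgHom π v = permAct π v := rfl

lemma l2_permAct (π : Equiv.Perm (Fin d)) (v : Fin d → ℂ) : l2 d (permAct π v) = l2 d v := by
  unfold l2 permAct
  rw [Equiv.sum_comp π⁻¹ (fun k => ‖v k‖ ^ 2)]

def sqrtHammingDist (π ρ : Equiv.Perm (Fin d)) : ℝ :=
  Real.sqrt (({k | π k ≠ ρ k} : Set (Fin d)).ncard / d)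

lemma l2_permAct_sub_permAct_le (π ρ : Equiv.Perm (Fin d)) {v : Fin d → ℂ} {B : ℝ}
    (hB : 0 ≤ B) (hv : ∀ k, ‖v k‖ ≤ B) :
    l2 d (permAct π v - permAct ρ v) ≤ 2 * B * sqrtHammingDist π ρ := by
  classical
  have hsum : ∑ k, ‖(permAct π v - permAct ρ v) k‖ ^ 2
      ≤ ({k | π k ≠ ρ k} : Set (Fin d)).ncard * (2 * B) ^ 2 := by
    rw [← Equiv.sum_comp π]
    calc _ ≤ ∑ j, if π j ≠ ρ j then (2 * B) ^ 2 else 0 := Finset.sum_le_sum fun j _ => by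
          split_ifs with h
          · gcongr
            exact (norm_sub_le _ _).trans ((add_le_add (hv _) (hv _)).trans_eq (two_mul B).symm)
          · rw [not_not] at h
            have hj : ρ⁻¹ (π j) = j := by rw [h]; simp
            simp [permAct, hj]
      _ = _ := by
          rw [Finset.sum_ite, Finset.sum_const, Finset.sum_const_zero, add_zero, nsmul_eq_mul,
            Set.ncard_eq_toFinset_card', Set.toFinset_ofPred]
  calc l2 d (permAct π v - permAct ρ v)
      ≤ Real.sqrt (({k | π k ≠ ρ k} : Set (Fin d)).ncard / d * (2 * B) ^ 2) := by
        unfold l2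
        rw [div_mul_eq_mul_div]
        gcongr
    _ = _ := by
        rw [Real.sqrt_mul (by positivity), Real.sqrt_sq (by positivity), mul_comm, sqrtHammingDist]

end L2

lemma SoficApprox.tendsto_sqrtHammingDist (SA : SoficApprox G) (s t : G) :
    Tendsto (fun i => sqrtHammingDist (SA.σ i (s * t)) (SA.σ i s * SA.σ i t)) atTop (nhds 0) := by
  have hcompl : ∀ i, (({k | SA.σ i (s * t) k ≠ (SA.σ i s * SA.σ i t) k} :
      Set (Fin (SA.d i))).ncard : ℝ) / SA.d i
      = 1 - (({k | SA.σ i (s * t) k = SA.σ i s (SA.σ i t k)} :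
        Set (Fin (SA.d i))).ncard : ℝ) / SA.d i := fun i => by
    have hd : (SA.d i : ℝ) ≠ 0 := Nat.cast_ne_zero.2 (SA.d_pos i).ne'
    have h := Set.ncard_add_ncard_compl {k | SA.σ i (s * t) k = SA.σ i s (SA.σ i t k)}
    rw [Nat.card_eq_fintype_card, Fintype.card_fin] at h
    rw [eq_sub_iff_add_eq, ← add_div, div_eq_one_iff_eq hd, add_comm]
    exact_mod_cast h
  simp_rw [sqrtHammingDist, hcompl]
  simpa using ((tendsto_const_nhds (x := (1 : ℝ))).sub (SA.approx_mul s t)).sqrt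

section WeightedSum

variable {a : ℕ → ℝ} {B : ℝ}

lemma summable_half_pow_mul (h0 : ∀ n, 0 ≤ a n) (hB : ∀ n, a n ≤ B) :
    Summable fun n => (1 / 2 : ℝ) ^ (n + 1) * a n :=
  .of_nonneg_of_le (fun n => by have := h0 n; positivity)
    (fun n => mul_le_mul_of_nonneg_left (hB n) (by positivity))
    ((summable_geometric_two.mul_left (1 / 2)).mul_right B |>.congr fun n => by ring)

lemma le_two_pow_mul_tsum (h0 : ∀ n, 0 ≤ a n) (hB : ∀ n, a n ≤ B) (n : ℕ) :
    a n ≤ 2 ^ (n + 1) * ∑' k, (1 / 2 : ℝ) ^ (k + 1) * a k := by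
  have h := (summable_half_pow_mul h0 hB).le_tsum n fun k _ => by have := h0 k; positivity
  rwa [show (1 / 2 : ℝ) ^ (n + 1) = (2 ^ (n + 1))⁻¹ by rw [one_div, inv_pow],
    inv_mul_le_iff₀ (by positivity)] at h

lemma tsum_half_pow_mul_le (h0 : ∀ n, 0 ≤ a n) (hB : ∀ n, a n ≤ B) :
    ∑' n, (1 / 2 : ℝ) ^ (n + 1) * a n ≤ B := by
  calc ∑' n, (1 / 2 : ℝ) ^ (n + 1) * a n ≤ ∑' n, (1 / 2 : ℝ) ^ (n + 1) * B :=
        (summable_half_pow_mul h0 hB).tsum_le_tsum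
          (fun n => mul_le_mul_of_nonneg_left (hB n) (by positivity))
          (summable_half_pow_mul (fun _ => (h0 0).trans (hB 0)) fun _ => le_rfl)
    _ = B := by
        simp_rw [pow_succ, mul_comm _ (1 / 2 : ℝ), mul_assoc, tsum_mul_left, tsum_mul_right,
          tsum_geometric_two]
        ring

lemma sum_range_half_pow_succ (N : ℕ) :
    ∑ n ∈ Finset.range N, (1 / 2 : ℝ) ^ (n + 1) = 1 - (1 / 2) ^ N := by
  induction N with
  | zero => simp
  | succ N ih => rw [Finset.sum_range_succ, ih]; ring

lemma tsum_half_pow_mul_le_of_le (h0 : ∀ n, 0 ≤ a n) (hB : ∀ n, a n ≤ B) {c : ℝ} (hc : 0 ≤ c)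
    {N : ℕ} (ha : ∀ n < N, a n ≤ c) :
    ∑' n, (1 / 2 : ℝ) ^ (n + 1) * a n ≤ c + B * (1 / 2) ^ N := by
  rw [← (summable_half_pow_mul h0 hB).sum_add_tsum_nat_add N]
  gcongr
  · calc ∑ n ∈ Finset.range N, (1 / 2 : ℝ) ^ (n + 1) * a n
          ≤ ∑ n ∈ Finset.range N, (1 / 2 : ℝ) ^ (n + 1) * c :=
          Finset.sum_le_sum fun n hn =>
            mul_le_mul_of_nonneg_left (ha n (Finset.mem_range.1 hn)) (by positivity)
      _ ≤ c := by
          rw [← Finset.sum_mul, sum_range_half_pow_succ]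
          nlinarith [pow_pos (by norm_num : (0 : ℝ) < 1 / 2) N]
  · calc ∑' k, (1 / 2 : ℝ) ^ (k + N + 1) * a (k + N)
          = (1 / 2) ^ N * ∑' k, (1 / 2 : ℝ) ^ (k + 1) * a (k + N) := by
          rw [← tsum_mul_left]
          exact tsum_congr fun k => by ring
      _ ≤ B * (1 / 2) ^ N := by
          rw [mul_comm B]
          gcongr
          exact tsum_half_pow_mul_le (fun k => h0 _) fun k => hB _

end WeightedSum

section Action

variable {T : G → X → X} {hc : ∀ s, Continuous (T s)}

def alphaStarAlgHom (T : G → X → X) (hc : ∀ s, Continuous (T s)) (s : G) :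
    C(X, ℂ) →⋆ₐ[ℂ] C(X, ℂ) :=
  ContinuousMap.compStarAlgHom' ℂ ℂ ⟨T s⁻¹, hc s⁻¹⟩

@[simp] lemma alphaStarAlgHom_apply (s : G) (f : C(X, ℂ)) :
    alphaStarAlgHom T hc s f = alphaC T hc s f := rfl

lemma alphaC_alphaC (hTmul : ∀ s t : G, T (s * t) = T s ∘ T t) (s t : G) (f : C(X, ℂ)) :
    alphaC T hc s (alphaC T hc t f) = alphaC T hc (s * t) f := by
  ext x
  simp [alphaC, mul_inv_rev, hTmul]

lemma alphaC_one (hT1 : T 1 = id) (f : C(X, ℂ)) : alphaC T hc 1 f = f := by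
  ext x
  simp [alphaC, hT1]

lemma continuous_alphaC (s : G) : Continuous (alphaC T hc s) :=
  ContinuousMap.continuous_precomp _

lemma star_alphaC_cplx (s : G) (f : C(X, ℝ)) :
    star (alphaC T hc s (cplx f)) = alphaC T hc s (cplx f) := by
  ext x
  exact Complex.conj_ofReal _

def translates (T : G → X → X) (hc : ∀ s, Continuous (T s)) (r : ℕ → C(X, ℝ)) :
    G × ℕ → C(X, ℂ) :=
  fun i => alphaC T hc i.1 (cplx (r i.2))

lemma dense_adjoin_translates [CompactSpace X] (hT1 : T 1 = id)
    (hTmul : ∀ s t : G, T (s * t) = T s ∘ T t) {r : ℕ → C(X, ℝ)} (hgen : DynGenTop T hc r) :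
    Dense (Algebra.adjoin ℂ (Set.range (translates T hc r)) : Set C(X, ℂ)) := by
  set S := Set.range (translates T hc r)
  have hstar : star S ⊆ S := fun f ⟨i, hi⟩ => ⟨i, by
    rw [← star_star f, ← hi]
    exact (star_alphaC_cplx _ _).symm⟩
  set A := StarAlgebra.adjoin ℂ S
  have hA : A.toSubalgebra = Algebra.adjoin ℂ S := by
    rw [StarAlgebra.adjoin_toSubalgebra, Set.union_eq_left.2 hstar]
  have hinv : ∀ s, Set.MapsTo (alphaC T hc s) A A := fun s f hf => by
    have hmap : alphaStarAlgHom T hc s f ∈ A.map (alphaStarAlgHom T hc s) := ⟨f, hf, rfl⟩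
    rw [StarAlgHom.map_adjoin] at hmap
    refine StarAlgebra.adjoin_le ?_ hmap
    rintro _ ⟨_, ⟨⟨t, n⟩, rfl⟩, rfl⟩
    exact StarAlgebra.subset_adjoin ℂ S ⟨(s * t, n), (alphaC_alphaC hTmul s t _).symm⟩
  have htop : A.topologicalClosure = ⊤ := by
    refine hgen _ A.isClosed_topologicalClosure (fun s f hf => ?_) fun n => ?_
    · rw [← SetLike.mem_coe, StarSubalgebra.topologicalClosure_coe] at hf ⊢
      exact map_mem_closure (continuous_alphaC s) hf (hinv s)
    · refine A.le_topologicalClosure (StarAlgebra.subset_adjoin ℂ S ⟨(1, n), ?_⟩)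
      exact alphaC_one hT1 _
  rw [dense_iff_closure_eq, ← hA, StarSubalgebra.coe_toSubalgebra,
    ← StarSubalgebra.topologicalClosure_coe, htop, StarSubalgebra.coe_top]

end Action

def L2Controlled {ι : Type*} (u : ι → C(X, ℂ)) (g : C(X, ℂ)) : Prop :=
  ∃ (I : Finset ι) (L : ℝ), 0 ≤ L ∧ ∀ (d : ℕ) (Φ Ψ : C(X, ℂ) →ₐ[ℂ] (Fin d → ℂ)),
    l2 d (Φ g - Ψ g) ≤ L * ∑ i ∈ I, l2 d (Φ (u i) - Ψ (u i))

namespace L2Controlled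

variable {ι : Type*} {u : ι → C(X, ℂ)}

lemma apply (i : ι) : L2Controlled u (u i) :=
  ⟨{i}, 1, zero_le_one, fun _ _ _ => by simp⟩

lemma algebraMap (c : ℂ) : L2Controlled u (algebraMap ℂ C(X, ℂ) c) :=
  ⟨∅, 0, le_rfl, fun _ _ _ => by simp [AlgHom.commutes]⟩

lemma add {f g : C(X, ℂ)} (hf : L2Controlled u f) (hg : L2Controlled u g) :
    L2Controlled u (f + g) := by
  classical
  obtain ⟨I, L, hL, hf⟩ := hf
  obtain ⟨J, M, hM, hg⟩ := hg
  refine ⟨I ∪ J, L + M, add_nonneg hL hM, fun d Φ Ψ => ?_⟩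
  calc l2 d (Φ (f + g) - Ψ (f + g)) = l2 d ((Φ f - Ψ f) + (Φ g - Ψ g)) := by
        simp only [map_add]; abel_nf
    _ ≤ L * ∑ i ∈ I, l2 d (Φ (u i) - Ψ (u i)) + M * ∑ i ∈ J, l2 d (Φ (u i) - Ψ (u i)) :=
        (l2_add_le _ _).trans (add_le_add (hf d Φ Ψ) (hg d Φ Ψ))
    _ ≤ (L + M) * ∑ i ∈ I ∪ J, l2 d (Φ (u i) - Ψ (u i)) := by
        rw [add_mul]
        gcongr
        exacts [fun _ _ _ => l2_nonneg _, Finset.subset_union_left, fun _ _ _ => l2_nonneg _,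
          Finset.subset_union_right]

end L2Controlled

section Compact

variable [CompactSpace X] {d : ℕ}

lemma norm_cplx_le {f : C(X, ℝ)} (hf : ∀ x, |f x| ≤ 1) : ‖cplx f‖ ≤ 1 :=
  (ContinuousMap.norm_le _ zero_le_one).2 fun x => by
    simpa [cplx, Complex.norm_real] using hf x

lemma norm_algHom_apply_le (φ : C(X, ℂ) →ₐ[ℂ] (Fin d → ℂ)) (f : C(X, ℂ)) (k : Fin d) :
    ‖φ f k‖ ≤ ‖f‖ := by
  cases isEmpty_or_nonempty X
  · have h := congr_fun (map_one φ) k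
    rw [Subsingleton.elim (1 : C(X, ℂ)) 0, map_zero] at h
    exact absurd h.symm one_ne_zero
  · exact AlgHom.norm_apply_le_self ((Pi.evalAlgHom ℂ (fun _ => ℂ) k).comp φ) f

lemma l2_algHom_apply_le (φ : C(X, ℂ) →ₐ[ℂ] (Fin d → ℂ)) (f : C(X, ℂ)) : l2 d (φ f) ≤ ‖f‖ :=
  l2_le_of_forall_norm_le (norm_nonneg f) (norm_algHom_apply_le φ f)

lemma l2_algHom_apply_sub_le (Φ Ψ : C(X, ℂ) →ₐ[ℂ] (Fin d → ℂ)) (f g : C(X, ℂ)) :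
    l2 d (Φ f - Ψ g) ≤ ‖f‖ + ‖g‖ :=
  (l2_sub_le _ _).trans (add_le_add (l2_algHom_apply_le Φ f) (l2_algHom_apply_le Ψ g))

namespace L2Controlled

variable {ι : Type*} {u : ι → C(X, ℂ)}

lemma mul {f g : C(X, ℂ)} (hf : L2Controlled u f) (hg : L2Controlled u g) :
    L2Controlled u (f * g) := by
  classical
  obtain ⟨I, L, hL, hf⟩ := hf
  obtain ⟨J, M, hM, hg⟩ := hg
  refine ⟨I ∪ J, ‖g‖ * L + ‖f‖ * M, by positivity, fun d Φ Ψ => ?_⟩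
  calc l2 d (Φ (f * g) - Ψ (f * g)) = l2 d ((Φ f - Ψ f) * Φ g + Ψ f * (Φ g - Ψ g)) := by
        simp only [map_mul]; ring_nf
    _ ≤ ‖g‖ * l2 d (Φ f - Ψ f) + ‖f‖ * l2 d (Φ g - Ψ g) := by
        refine (l2_add_le _ _).trans (add_le_add ?_ ?_)
        · rw [mul_comm]; exact l2_mul_le (norm_nonneg g) (norm_algHom_apply_le Φ g)
        · exact l2_mul_le (norm_nonneg f) (norm_algHom_apply_le Ψ f)
    _ ≤ ‖g‖ * (L * ∑ i ∈ I, l2 d (Φ (u i) - Ψ (u i)))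
          + ‖f‖ * (M * ∑ i ∈ J, l2 d (Φ (u i) - Ψ (u i))) := by
        gcongr
        exacts [hf d Φ Ψ, hg d Φ Ψ]
    _ ≤ (‖g‖ * L + ‖f‖ * M) * ∑ i ∈ I ∪ J, l2 d (Φ (u i) - Ψ (u i)) := by
        rw [add_mul, mul_assoc, mul_assoc]
        gcongr
        exacts [fun _ _ _ => l2_nonneg _, Finset.subset_union_left, fun _ _ _ => l2_nonneg _,
          Finset.subset_union_right]

end L2Controlled

lemma l2Controlled_of_mem_adjoin {ι : Type*} {u : ι → C(X, ℂ)} {g : C(X, ℂ)}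
    (hg : g ∈ Algebra.adjoin ℂ (Set.range u)) : L2Controlled u g := by
  induction hg using Algebra.adjoin_induction with
  | mem x hx => obtain ⟨i, rfl⟩ := hx; exact .apply i
  | algebraMap c => exact .algebraMap c
  | add x y _ _ hx hy => exact hx.add hy
  | mul x y _ _ hx hy => exact hx.mul hy

lemma exists_forall_l2_sub_lt {ι : Type*} {u : ι → C(X, ℂ)}
    (hu : Dense (Algebra.adjoin ℂ (Set.range u) : Set C(X, ℂ))) (f : C(X, ℂ)) {η : ℝ}
    (hη : 0 < η) :
    ∃ (I : Finset ι) (κ : ℝ), 0 < κ ∧ ∀ (d : ℕ) (Φ Ψ : C(X, ℂ) →ₐ[ℂ] (Fin d → ℂ)),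
      (∀ i ∈ I, l2 d (Φ (u i) - Ψ (u i)) < κ) → l2 d (Φ f - Ψ f) < η := by
  obtain ⟨g, hg, hfg⟩ := hu.exists_dist_lt f (by positivity : 0 < η / 4)
  obtain ⟨I, L, hL, hgI⟩ := l2Controlled_of_mem_adjoin hg
  refine ⟨I, η / (2 * (L * I.card + 1)), by positivity, fun d Φ Ψ hI => ?_⟩
  have hsum : ∑ i ∈ I, l2 d (Φ (u i) - Ψ (u i)) ≤ I.card * (η / (2 * (L * I.card + 1))) := by
    simpa using Finset.sum_le_card_nsmul _ _ _ fun i hi => (hI i hi).le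
  have hLI : L * (I.card * (η / (2 * (L * I.card + 1)))) ≤ η / 2 := by
    rw [← mul_assoc, mul_div_assoc', div_le_div_iff₀ (by positivity) two_pos]
    nlinarith [mul_nonneg hL (Nat.cast_nonneg (α := ℝ) I.card)]
  rw [dist_eq_norm] at hfg
  calc l2 d (Φ f - Ψ f) = l2 d ((Φ g - Ψ g) + (Φ (f - g) - Ψ (f - g))) := by
        simp only [map_sub]; abel_nf
    _ ≤ L * ∑ i ∈ I, l2 d (Φ (u i) - Ψ (u i)) + (‖f - g‖ + ‖f - g‖) :=
        (l2_add_le _ _).trans (add_le_add (hgI d Φ Ψ) (l2_algHom_apply_sub_le Φ Ψ _ _))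
    _ < η := by nlinarith

lemma exists_forall_mem_l2_sub_lt {ι : Type*} {u : ι → C(X, ℂ)}
    (hu : Dense (Algebra.adjoin ℂ (Set.range u) : Set C(X, ℂ))) (fs : Finset C(X, ℂ)) {η : ℝ}
    (hη : 0 < η) :
    ∃ (I : Finset ι) (κ : ℝ), 0 < κ ∧ ∀ (d : ℕ) (Φ Ψ : C(X, ℂ) →ₐ[ℂ] (Fin d → ℂ)),
      (∀ i ∈ I, l2 d (Φ (u i) - Ψ (u i)) < κ) → ∀ f ∈ fs, l2 d (Φ f - Ψ f) < η := by
  classical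
  induction fs using Finset.induction_on with
  | empty => exact ⟨∅, 1, one_pos, by simp⟩
  | insert f fs _ ih =>
    obtain ⟨I, κ, hκ, hI⟩ := ih
    obtain ⟨J, κ', hκ', hJ⟩ := exists_forall_l2_sub_lt hu f hη
    refine ⟨I ∪ J, min κ κ', lt_min hκ hκ', fun d Φ Ψ hIJ g hg => ?_⟩
    rcases Finset.mem_insert.1 hg with rfl | hg
    · exact hJ d Φ Ψ fun i hi =>
        (hIJ i (Finset.mem_union_right _ hi)).trans_le (min_le_right _ _)
    · exact hI d Φ Ψ (fun i hi =>
        (hIJ i (Finset.mem_union_left _ hi)).trans_le (min_le_left _ _)) g hg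

end Compact

lemma elog_mono : Monotone elog := by
  intro m n h
  unfold elog
  rcases eq_or_ne n ⊤ with hn | hn
  · simp [hn]
  have hm : m ≠ ⊤ := ne_top_of_le_ne_top hn h
  rcases eq_or_ne m 0 with hm0 | hm0
  · simp [hm0]
  have hn0 : n ≠ 0 := (pos_of_ne_zero hm0 |>.trans_le h).ne'
  rw [if_neg hn, if_neg hm, if_neg hm0, if_neg hn0, EReal.coe_le_coe_iff]
  exact Real.log_le_log (by exact_mod_cast (ENat.toNat_pos hm0 hm)) (by
    exact_mod_cast ENat.toNat_le_toNat h hn)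

lemma sepNum_mono {Y : Type*} {S S' : Set Y} {ρ ρ' : Y → Y → ℝ} {ε ε' : ℝ} (hS : S ⊆ S')
    (hsep : ∀ x ∈ S, ∀ y ∈ S, ε < ρ x y → ε' < ρ' x y) :
    sepNum S ρ ε ≤ sepNum S' ρ' ε' :=
  iSup₂_le fun t ht => le_iSup₂_of_le (f := fun (t : Finset Y) _ => (t.card : ℕ∞)) t
    ⟨ht.1.trans hS, fun x hx y hy hxy => hsep x (ht.1 hx) y (ht.1 hy) (ht.2 x hx y hy hxy)⟩ le_rfl

section Defect

variable {T : G → X → X} {hc : ∀ s, Continuous (T s)} {r : ℕ → C(X, ℝ)} {d : ℕ}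

def defect (T : G → X → X) (hc : ∀ s, Continuous (T s)) (r : ℕ → C(X, ℝ))
    (σ : G → Equiv.Perm (Fin d)) (φ : C(X, ℂ) →ₐ[ℂ] (Fin d → ℂ)) (s : G) : ℝ :=
  rhoSeqC r (φ.comp (alphaStarAlgHom T hc s).toAlgHom) ((permAlgHom (σ s)).comp φ)

lemma mem_homTop_iff {F : Finset G} {δ : ℝ} {σ : G → Equiv.Perm (Fin d)}
    {φ : C(X, ℂ) →ₐ[ℂ] (Fin d → ℂ)} :
    φ ∈ HomTop T hc r F δ σ ↔ ∀ s ∈ F, defect T hc r σ φ s < δ := Iff.rfl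

lemma homTop_mono {F F' : Finset G} {δ δ' : ℝ} {σ : G → Equiv.Perm (Fin d)} (hF : F ⊆ F')
    (hδ : δ' ≤ δ) : HomTop T hc r F' δ' σ ⊆ HomTop T hc r F δ σ :=
  fun _ hφ s hs => (hφ s (hF hs)).trans_le hδ

lemma rhoSeqC_nonneg (Φ Ψ : C(X, ℂ) →ₐ[ℂ] (Fin d → ℂ)) : 0 ≤ rhoSeqC r Φ Ψ :=
  tsum_nonneg fun n => mul_nonneg (by positivity) (l2_nonneg _)

lemma defect_nonneg (σ : G → Equiv.Perm (Fin d)) (φ : C(X, ℂ) →ₐ[ℂ] (Fin d → ℂ)) (s : G) :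
    0 ≤ defect T hc r σ φ s :=
  rhoSeqC_nonneg _ _

variable [CompactSpace X]

lemma l2_cplx_sub_le_two (hr : ∀ n x, |r n x| ≤ 1) (Φ Ψ : C(X, ℂ) →ₐ[ℂ] (Fin d → ℂ)) (n : ℕ) :
    l2 d (Φ (cplx (r n)) - Ψ (cplx (r n))) ≤ 2 :=
  (l2_algHom_apply_sub_le Φ Ψ _ _).trans (by linarith [norm_cplx_le (hr n)])

lemma l2_cplx_sub_le_two_pow_mul_rhoSeqC (hr : ∀ n x, |r n x| ≤ 1)
    (Φ Ψ : C(X, ℂ) →ₐ[ℂ] (Fin d → ℂ)) (n : ℕ) :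
    l2 d (Φ (cplx (r n)) - Ψ (cplx (r n))) ≤ 2 ^ (n + 1) * rhoSeqC r Φ Ψ :=
  le_two_pow_mul_tsum (fun _ => l2_nonneg _) (l2_cplx_sub_le_two hr Φ Ψ) n

lemma rhoSeqC_le_of_forall_lt (hr : ∀ n x, |r n x| ≤ 1) (Φ Ψ : C(X, ℂ) →ₐ[ℂ] (Fin d → ℂ))
    {c : ℝ} (hc : 0 ≤ c) {N : ℕ} (h : ∀ n < N, l2 d (Φ (cplx (r n)) - Ψ (cplx (r n))) ≤ c) :
    rhoSeqC r Φ Ψ ≤ c + 2 * (1 / 2) ^ N :=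
  tsum_half_pow_mul_le_of_le (fun _ => l2_nonneg _) (l2_cplx_sub_le_two hr Φ Ψ) hc h

lemma l2_sub_permAct_le_defect (hr : ∀ n x, |r n x| ≤ 1) (σ : G → Equiv.Perm (Fin d))
    (φ : C(X, ℂ) →ₐ[ℂ] (Fin d → ℂ)) (t : G) (n : ℕ) :
    l2 d (φ (alphaC T hc t (cplx (r n))) - permAct (σ t) (φ (cplx (r n))))
      ≤ 2 ^ (n + 1) * defect T hc r σ φ t :=
  l2_cplx_sub_le_two_pow_mul_rhoSeqC hr
    (φ.comp (alphaStarAlgHom T hc t).toAlgHom) ((permAlgHom (σ t)).comp φ) n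

lemma l2_translates_sub_le (hr : ∀ n x, |r n x| ≤ 1) (σ : G → Equiv.Perm (Fin d))
    (φ ψ : C(X, ℂ) →ₐ[ℂ] (Fin d → ℂ)) (t : G) (n : ℕ) :
    l2 d (φ (translates T hc r (t, n)) - ψ (translates T hc r (t, n)))
      ≤ 2 ^ (n + 1) * (defect T hc r σ φ t + rhoSeqC r φ ψ + defect T hc r σ ψ t) := by
  have hφ := l2_sub_permAct_le_defect (T := T) (hc := hc) hr σ φ t n
  have hφψ := l2_cplx_sub_le_two_pow_mul_rhoSeqC hr φ ψ n
  have hψ := l2_sub_permAct_le_defect (T := T) (hc := hc) hr σ ψ t n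
  set f := cplx (r n)
  calc l2 d (φ (alphaC T hc t f) - ψ (alphaC T hc t f))
      = l2 d ((φ (alphaC T hc t f) - permAct (σ t) (φ f)) + permAct (σ t) (φ f - ψ f)
          - (ψ (alphaC T hc t f) - permAct (σ t) (ψ f))) := by
        congr 1; ext k; simp [permAct]
    _ ≤ l2 d (φ (alphaC T hc t f) - permAct (σ t) (φ f)) + l2 d (φ f - ψ f)
          + l2 d (ψ (alphaC T hc t f) - permAct (σ t) (ψ f)) := by
        grw [l2_sub_le, l2_add_le, l2_permAct]
    _ ≤ _ := by linarith

end Defect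

section Comparison

variable {T : G → X → X} {hc : ∀ s, Continuous (T s)} [CompactSpace X] {d : ℕ}

lemma l2_alphaC_translates_sub_le (hTmul : ∀ s t : G, T (s * t) = T s ∘ T t)
    {r : ℕ → C(X, ℝ)} (hr : ∀ n x, |r n x| ≤ 1) (σ : G → Equiv.Perm (Fin d))
    (φ : C(X, ℂ) →ₐ[ℂ] (Fin d → ℂ)) (s t : G) (n : ℕ) :
    l2 d (φ (alphaC T hc s (translates T hc r (t, n)))
        - permAct (σ s) (φ (translates T hc r (t, n))))
      ≤ 2 ^ (n + 1) * (defect T hc r σ φ (s * t) + defect T hc r σ φ t)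
        + 2 * sqrtHammingDist (σ (s * t)) (σ s * σ t) := by
  have hst := l2_sub_permAct_le_defect (T := T) (hc := hc) hr σ φ (s * t) n
  have ht := l2_sub_permAct_le_defect (T := T) (hc := hc) hr σ φ t n
  set f := cplx (r n)
  have hmis := l2_permAct_sub_permAct_le (σ (s * t)) (σ s * σ t) zero_le_one
    fun k => (norm_algHom_apply_le φ f k).trans (norm_cplx_le (hr n))
  calc l2 d (φ (alphaC T hc s (alphaC T hc t f)) - permAct (σ s) (φ (alphaC T hc t f)))
      = l2 d ((φ (alphaC T hc (s * t) f) - permAct (σ (s * t)) (φ f))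
          + (permAct (σ (s * t)) (φ f) - permAct (σ s * σ t) (φ f))
          - permAct (σ s) (φ (alphaC T hc t f) - permAct (σ t) (φ f))) := by
        rw [alphaC_alphaC hTmul]; congr 1; ext k; simp [permAct]
    _ ≤ l2 d (φ (alphaC T hc (s * t) f) - permAct (σ (s * t)) (φ f))
          + l2 d (permAct (σ (s * t)) (φ f) - permAct (σ s * σ t) (φ f))
          + l2 d (φ (alphaC T hc t f) - permAct (σ t) (φ f)) := by
        grw [l2_sub_le, l2_add_le, l2_permAct]
    _ ≤ _ := by linarith

lemma l2_translates_sub_lt {r : ℕ → C(X, ℝ)} (hr : ∀ n x, |r n x| ≤ 1) {E : Finset G} {θ : ℝ}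
    {σ : G → Equiv.Perm (Fin d)} {φ ψ : C(X, ℂ) →ₐ[ℂ] (Fin d → ℂ)}
    (hφ : φ ∈ HomTop T hc r E θ σ) (hψ : ψ ∈ HomTop T hc r E θ σ) (hρ : rhoSeqC r φ ψ < θ)
    {t : G} (ht : t ∈ E) (n : ℕ) :
    l2 d (φ (translates T hc r (t, n)) - ψ (translates T hc r (t, n))) < 2 ^ (n + 1) * (3 * θ) :=
  (l2_translates_sub_le hr σ φ ψ t n).trans_lt <| by
    gcongr
    linarith [mem_homTop_iff.1 hφ t ht, mem_homTop_iff.1 hψ t ht]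

lemma l2_alphaC_translates_sub_lt (hTmul : ∀ s t : G, T (s * t) = T s ∘ T t)
    {r : ℕ → C(X, ℝ)} (hr : ∀ n x, |r n x| ≤ 1) {F : Finset G} {δ : ℝ}
    {σ : G → Equiv.Perm (Fin d)} {φ : C(X, ℂ) →ₐ[ℂ] (Fin d → ℂ)} (hφ : φ ∈ HomTop T hc r F δ σ)
    {s t : G} (hst : s * t ∈ F) (ht : t ∈ F) (n : ℕ) :
    l2 d (φ (alphaC T hc s (translates T hc r (t, n)))
        - permAct (σ s) (φ (translates T hc r (t, n))))
      < 2 ^ (n + 1) * (2 * δ) + 2 * sqrtHammingDist (σ (s * t)) (σ s * σ t) :=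
  (l2_alphaC_translates_sub_le hTmul hr σ φ s t n).trans_lt <| by
    gcongr
    linarith [mem_homTop_iff.1 hφ _ hst, mem_homTop_iff.1 hφ t ht]

lemma exists_homTop_rhoSeqC_lt {p q : ℕ → C(X, ℝ)} (hp : ∀ n x, |p n x| ≤ 1)
    (hq : ∀ n x, |q n x| ≤ 1)
    (hdense : Dense (Algebra.adjoin ℂ (Set.range (translates T hc p)) : Set C(X, ℂ)))
    {ε : ℝ} (hε : 0 < ε) :
    ∃ (E : Finset G) (θ : ℝ), 0 < θ ∧ ∀ (d : ℕ) (σ : G → Equiv.Perm (Fin d))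
      (φ ψ : C(X, ℂ) →ₐ[ℂ] (Fin d → ℂ)), φ ∈ HomTop T hc p E θ σ → ψ ∈ HomTop T hc p E θ σ →
        rhoSeqC p φ ψ < θ → rhoSeqC q φ ψ < ε := by
  classical
  obtain ⟨N, hN⟩ := exists_pow_lt_of_lt_one (by positivity : 0 < ε / 4) one_half_lt_one
  obtain ⟨I, κ, hκ, hI⟩ := exists_forall_mem_l2_sub_lt hdense
    ((Finset.range N).image fun n => cplx (q n)) (half_pos hε)
  set M := I.sup Prod.snd
  refine ⟨I.image Prod.fst, κ / (3 * 2 ^ (M + 1)), by positivity,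
    fun d σ φ ψ hφ hψ hρ => ?_⟩
  have hsmall : ∀ i ∈ I, l2 d (φ (translates T hc p i) - ψ (translates T hc p i)) < κ := by
    rintro ⟨t, m⟩ hi
    have ht := Finset.mem_image_of_mem Prod.fst hi
    calc _ < 2 ^ (m + 1) * (3 * (κ / (3 * 2 ^ (M + 1)))) := l2_translates_sub_lt hp hφ hψ hρ ht m
      _ ≤ 2 ^ (M + 1) * (3 * (κ / (3 * 2 ^ (M + 1)))) := by
          gcongr
          exacts [one_le_two, Finset.le_sup (f := Prod.snd) hi]
      _ = κ := by field_simp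
  calc rhoSeqC q φ ψ ≤ ε / 2 + 2 * (1 / 2) ^ N :=
        rhoSeqC_le_of_forall_lt hq φ ψ (by positivity) fun n hn =>
          (hI d φ ψ hsmall _ (Finset.mem_image_of_mem _ (Finset.mem_range.2 hn))).le
    _ < ε := by linarith

lemma exists_eventually_homTop_subset (hTmul : ∀ s t : G, T (s * t) = T s ∘ T t)
    (SA : SoficApprox G) {p q : ℕ → C(X, ℝ)} (hp : ∀ n x, |p n x| ≤ 1)
    (hq : ∀ n x, |q n x| ≤ 1)
    (hdense : Dense (Algebra.adjoin ℂ (Set.range (translates T hc q)) : Set C(X, ℂ)))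
    {F' : Finset G} (hF' : F'.Nonempty) {δ' : ℝ} (hδ' : 0 < δ') :
    ∃ F : Finset G, F.Nonempty ∧ ∃ δ > 0,
      ∀ᶠ i in atTop, HomTop T hc q F δ (SA.σ i) ⊆ HomTop T hc p F' δ' (SA.σ i) := by
  classical
  obtain ⟨N, hN⟩ := exists_pow_lt_of_lt_one (by positivity : 0 < δ' / 4) one_half_lt_one
  obtain ⟨I, κ, hκ, hI⟩ := exists_forall_mem_l2_sub_lt hdense
    ((Finset.range N).image fun n => cplx (p n)) (half_pos hδ')
  set E := I.image Prod.fst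
  set M := I.sup Prod.snd
  have hmis : ∀ᶠ i in atTop, ∀ s ∈ F', ∀ t ∈ E,
      2 * sqrtHammingDist (SA.σ i (s * t)) (SA.σ i s * SA.σ i t) < κ / 2 := by
    simp only [eventually_all_finset]
    refine fun s _ t _ => ((SA.tendsto_sqrtHammingDist s t).const_mul 2).eventually_lt_const ?_
    linarith
  refine ⟨F' ∪ E ∪ Finset.image₂ (· * ·) F' E,
    hF'.mono (Finset.subset_union_left.trans Finset.subset_union_left),
    κ / (4 * 2 ^ (M + 1)), by positivity, ?_⟩
  filter_upwards [hmis] with i hi φ hφ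
  refine mem_homTop_iff.2 fun s hs => ?_
  set Φ := φ.comp (alphaStarAlgHom T hc s).toAlgHom
  set Ψ := (permAlgHom (SA.σ i s)).comp φ
  have hsmall : ∀ j ∈ I, l2 (SA.d i) (Φ (translates T hc q j) - Ψ (translates T hc q j)) < κ := by
    rintro ⟨t, n⟩ hj
    have ht : t ∈ E := Finset.mem_image_of_mem Prod.fst hj
    calc _ < 2 ^ (n + 1) * (2 * (κ / (4 * 2 ^ (M + 1))))
          + 2 * sqrtHammingDist (SA.σ i (s * t)) (SA.σ i s * SA.σ i t) :=
          l2_alphaC_translates_sub_lt hTmul hq hφ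
            (Finset.mem_union_right _ (Finset.mem_image₂_of_mem hs ht))
            (Finset.mem_union_left _ (Finset.mem_union_right _ ht)) n
      _ ≤ 2 ^ (M + 1) * (2 * (κ / (4 * 2 ^ (M + 1)))) + κ / 2 := by
          gcongr
          exacts [one_le_two, Finset.le_sup (f := Prod.snd) hj, (hi s hs t ht).le]
      _ = κ := by field_simp; ring
  calc defect T hc p (SA.σ i) φ s ≤ δ' / 2 + 2 * (1 / 2) ^ N :=
        rhoSeqC_le_of_forall_lt hp _ _ (by positivity) fun m hm =>
          (hI _ Φ Ψ hsmall _ (Finset.mem_image_of_mem _ (Finset.mem_range.2 hm))).le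
    _ < δ' := by linarith

end Comparison

lemma hTop_le_hTop_of_forall_exists {T : G → X → X} {hc : ∀ s, Continuous (T s)}
    (SA : SoficApprox G) {p q : ℕ → C(X, ℝ)}
    (h : ∀ ε > 0, ∃ ε' > 0, ∀ F' : Finset G, F'.Nonempty → ∀ δ' > 0,
      ∃ F : Finset G, F.Nonempty ∧ ∃ δ > 0, ∀ᶠ i in atTop,
        sepNum (HomTop T hc q F δ (SA.σ i)) (rhoSeqC q) ε
          ≤ sepNum (HomTop T hc p F' δ' (SA.σ i)) (rhoSeqC p) ε') :
    hTop T hc SA q ≤ hTop T hc SA p := by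
  refine iSup_le fun ⟨ε, hε⟩ => ?_
  obtain ⟨ε', hε', h⟩ := h ε hε
  refine le_iSup_of_le ⟨ε', hε'⟩ (le_iInf fun ⟨F', hF'⟩ => le_iInf fun ⟨δ', hδ'⟩ => ?_)
  obtain ⟨F, hF, δ, hδ, hev⟩ := h F' hF' δ' hδ'
  refine iInf_le_of_le ⟨F, hF⟩ (iInf_le_of_le ⟨δ, hδ⟩ (limsup_le_limsup ?_))
  filter_upwards [hev] with i hi
  exact mul_le_mul_of_nonneg_left (elog_mono hi) (EReal.coe_nonneg.2 (by positivity))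

lemma hTop_le_hTop [CompactSpace X] {T : G → X → X} {hc : ∀ s, Continuous (T s)}
    (hT1 : T 1 = id) (hTmul : ∀ s t : G, T (s * t) = T s ∘ T t) (SA : SoficApprox G)
    {p q : ℕ → C(X, ℝ)} (hp : ∀ n x, |p n x| ≤ 1) (hq : ∀ n x, |q n x| ≤ 1)
    (hgenp : DynGenTop T hc p) (hgenq : DynGenTop T hc q) :
    hTop T hc SA q ≤ hTop T hc SA p := by
  classical
  refine hTop_le_hTop_of_forall_exists SA fun ε hε => ?_
  obtain ⟨E, θ, hθ, hsep⟩ :=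
    exists_homTop_rhoSeqC_lt hp hq (dense_adjoin_translates hT1 hTmul hgenp) hε
  refine ⟨θ / 2, half_pos hθ, fun F' hF' δ' hδ' => ?_⟩
  obtain ⟨F, hF, δ, hδ, hev⟩ := exists_eventually_homTop_subset hTmul SA hp hq
    (dense_adjoin_translates hT1 hTmul hgenq) (hF'.mono (Finset.subset_union_left (s₂ := E)))
    (lt_min hδ' hθ)
  refine ⟨F, hF, δ, hδ, hev.mono fun i hsub => sepNum_mono
    (hsub.trans (homTop_mono Finset.subset_union_left (min_le_left _ _))) ?_⟩
  intro φ hφ ψ hψ hε'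
  by_contra! hle
  have hE : HomTop T hc p (F' ∪ E) (min δ' θ) (SA.σ i) ⊆ HomTop T hc p E θ (SA.σ i) :=
    homTop_mono Finset.subset_union_right (min_le_right δ' θ)
  exact (hsep _ _ φ ψ (hE (hsub hφ)) (hE (hsub hψ)) (by linarith)).not_gt hε'

theorem stmt8_general
    {X : Type*} [TopologicalSpace X] [CompactSpace X]
    {G : Type*} [Group G]
    (T : G → X → X) (hc : ∀ s : G, Continuous (T s))
    (hT1 : T 1 = id) (hTmul : ∀ s t : G, T (s * t) = T s ∘ T t)
    (SA : SoficApprox G)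
    (p q : ℕ → C(X, ℝ))
    (hp : ∀ n x, |p n x| ≤ 1) (hq : ∀ n x, |q n x| ≤ 1)
    (hgenp : DynGenTop T hc p) (hgenq : DynGenTop T hc q) :
    hTop T hc SA q = hTop T hc SA p :=
  le_antisymm (hTop_le_hTop hT1 hTmul SA hp hq hgenp hgenq)
    (hTop_le_hTop hT1 hTmul SA hq hp hgenq hgenp)

/-- Theorem 4.5 (`T-gen comparison top`): any two dynamically generating sequences in the
unit ball of `C_ℝ(X)` have the same sofic topological entropy. -/
theorem stmt8
    {X : Type*} [TopologicalSpace X] [CompactSpace X] [TopologicalSpace.MetrizableSpace X]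
    {G : Type*} [Group G] [Countable G]
    (T : G → X → X) (hc : ∀ s : G, Continuous (T s))
    (hT1 : T 1 = id) (hTmul : ∀ s t : G, T (s * t) = T s ∘ T t)
    (SA : SoficApprox G)
    (p q : ℕ → C(X, ℝ))
    (hp : ∀ n x, |p n x| ≤ 1) (hq : ∀ n x, |q n x| ≤ 1)
    (hgenp : DynGenTop T hc p) (hgenq : DynGenTop T hc q) :
    hTop T hc SA q = hTop T hc SA p :=
  stmt8_general T hc hT1 hTmul SA p q hp hq hgenp hgenq

end Sofic
end
end

section
/- Let P be a finite partition of unity in C(X) consisting of projections (indicator functions of clopen sets). Then h_Σ(P) = inf_F inf_{δ>0} limsup_{i→∞} (1/d_i) log N_0(Hom(P,F,δ,σ_i), ρ_P), where N_0 denotes cardinality modulo the relation of zero ρ_P-distance and F ranges over nonempty finite subsets of G. -/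
open MeasureTheory Filter
open scoped ENNReal ComplexOrder

noncomputable section

namespace Sofic

variable {G : Type*} [Group G] {X : Type*} [TopologicalSpace X]

/-- The pseudometric `ρ_P(φ,ψ) = max_{p ∈ P} ‖φ(p) − ψ(p)‖₂` for a finite partition of
unity `P` in `C(X)`. -/
def rhoPartC {n d : ℕ} (P : Fin n → C(X, ℂ)) (φ ψ : C(X, ℂ) →ₐ[ℂ] (Fin d → ℂ)) : ℝ :=
  ⨆ i : Fin n, l2 d (φ (P i) - ψ (P i))

/-- The pseudometric `ρ_{P,∞}(φ,ψ) = max_{p ∈ P} ‖φ(p) − ψ(p)‖_∞`. -/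
def rhoPartCinf {n d : ℕ} (P : Fin n → C(X, ℂ)) (φ ψ : C(X, ℂ) →ₐ[ℂ] (Fin d → ℂ)) : ℝ :=
  ⨆ i : Fin n, linf d (φ (P i) - ψ (P i))

/-- `Hom(P,F,δ,σ)` (Definition 4.7) for a finite partition of unity `P` in `C(X)`. -/
def HomTopP (T : G → X → X) (hc : ∀ s, Continuous (T s)) {n : ℕ} (P : Fin n → C(X, ℂ))
    (F : Finset G) (δ : ℝ) {d : ℕ} (σ : G → Equiv.Perm (Fin d)) :
    Set (C(X, ℂ) →ₐ[ℂ] (Fin d → ℂ)) :=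
  {φ | ∀ i : Fin n, ∀ s ∈ F,
    l2 d (φ (alphaC T hc s (P i)) - permAct (σ s) (φ (P i))) < δ}

/-- The topological entropy `h_Σ(P)` of a finite partition of unity `P` in `C(X)`
(Definition 4.7). -/
def hTopP (T : G → X → X) (hc : ∀ s, Continuous (T s)) (SA : SoficApprox G) {n : ℕ}
    (P : Fin n → C(X, ℂ)) : EReal :=
  ⨆ ε : {ε : ℝ // 0 < ε}, ⨅ F : {F : Finset G // F.Nonempty}, ⨅ δ : {δ : ℝ // 0 < δ},
    limsup (fun i => ((((SA.d i : ℝ))⁻¹ : ℝ) : EReal) *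
      elog (sepNum (HomTopP T hc P (F : Finset G) (δ : ℝ) (SA.σ i)) (rhoPartC P) (ε : ℝ)))
      atTop

/-!
Because the elements of `P` are projections summing to `1`, a unital homomorphism
`φ : C(X) → ℂ^d` is determined on `P` by a colouring `{1,…,d} → P`, and `ρ_P(φ, ψ) ≤ ε` forces
the colourings of `φ` and `ψ` to differ in at most `n ε² d` coordinates. A `0`-separated set is
covered by the `ε`-balls around a maximal `ε`-separated subset, and each ball contains at most
`exp (2 n ε d)` of its points (a Chernoff bound for Hamming balls). Hence
`N_0 ≤ N_ε · exp (2 n ε d)`, and the resulting error `2 n ε` vanishes as `ε → 0`.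
-/

open Finset

section HammingBall

variable {ι β : Type*} [Fintype ι] [DecidableEq ι] [Fintype β] [DecidableEq β]

theorem sum_pow_hammingDist_le (f : ι → β) {t : ℝ} (ht : 0 ≤ t) :
    ∑ g : ι → β, t ^ hammingDist g f ≤ (1 + Fintype.card β * t) ^ Fintype.card ι := by
  have hprod : ∀ g : ι → β, t ^ hammingDist g f = ∏ k, if g k = f k then 1 else t := by
    intro g
    rw [prod_ite, prod_const_one, one_mul, prod_const]
    rfl
  have hfactor : ∀ k, ∑ j : β, (if j = f k then 1 else t) ≤ 1 + Fintype.card β * t := by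
    intro k
    calc ∑ j : β, (if j = f k then 1 else t) ≤ ∑ j : β, ((if j = f k then 1 else 0) + t) :=
          sum_le_sum fun j _ => by split_ifs <;> simp [ht]
      _ = 1 + Fintype.card β * t := by simp [sum_add_distrib]
  calc ∑ g : ι → β, t ^ hammingDist g f = ∏ k, ∑ j : β, if j = f k then 1 else t := by
        simp_rw [hprod]
        exact (Fintype.prod_sum fun k (j : β) => if j = f k then (1 : ℝ) else t).symm
    _ ≤ ∏ _k : ι, (1 + Fintype.card β * t) :=
        prod_le_prod (fun k _ => sum_nonneg fun j _ => by split_ifs <;> positivity)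
          fun k _ => hfactor k
    _ = (1 + Fintype.card β * t) ^ Fintype.card ι := by simp

/-- Chernoff bound: each `g` in the ball has weight `t ^ hammingDist g f ≥ t ^ m`. -/
theorem card_hammingBall_le_exp (f : ι → β) (m : ℕ) {t : ℝ} (ht0 : 0 < t) (ht1 : t ≤ 1) :
    (#{g : ι → β | hammingDist g f ≤ m} : ℝ) ≤
      Real.exp (Fintype.card β * t * Fintype.card ι + m / t) := by
  have hcount : (#{g : ι → β | hammingDist g f ≤ m} : ℝ) * t ^ m ≤
      (1 + Fintype.card β * t) ^ Fintype.card ι :=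
    calc (#{g : ι → β | hammingDist g f ≤ m} : ℝ) * t ^ m
        = ∑ g ∈ {g : ι → β | hammingDist g f ≤ m}, t ^ m := by rw [sum_const, nsmul_eq_mul]
      _ ≤ ∑ g ∈ {g : ι → β | hammingDist g f ≤ m}, t ^ hammingDist g f :=
          sum_le_sum fun g hg => pow_le_pow_of_le_one ht0.le ht1 (mem_filter.1 hg).2
      _ ≤ ∑ g : ι → β, t ^ hammingDist g f :=
          sum_le_sum_of_subset_of_nonneg (subset_univ _) fun _ _ _ => by positivity
      _ ≤ _ := sum_pow_hammingDist_le f ht0.le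
  have hbase : (1 + Fintype.card β * t) ^ Fintype.card ι ≤
      Real.exp (Fintype.card β * t * Fintype.card ι) := by
    rw [mul_comm _ (Fintype.card ι : ℝ), Real.exp_nat_mul]
    gcongr
    linarith [Real.add_one_le_exp (Fintype.card β * t)]
  have hinv : t⁻¹ ^ m ≤ Real.exp (m / t) := by
    rw [div_eq_mul_inv, Real.exp_nat_mul]
    gcongr
    linarith [Real.add_one_le_exp t⁻¹]
  calc (#{g : ι → β | hammingDist g f ≤ m} : ℝ)
      = (#{g : ι → β | hammingDist g f ≤ m} : ℝ) * t ^ m * t⁻¹ ^ m := by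
        rw [mul_assoc, ← mul_pow, mul_inv_cancel₀ ht0.ne', one_pow, mul_one]
    _ ≤ Real.exp (Fintype.card β * t * Fintype.card ι) * Real.exp (m / t) := by
        gcongr
        exact hcount.trans hbase
    _ = _ := (Real.exp_add _ _).symm

end HammingBall

theorem exists_map_eq_ite_of_sum_eq_one {A K ι : Type*} [Semiring A] [CommRing K] [IsDomain K]
    [CharZero K] [Fintype ι] [DecidableEq ι] {e : ι → A} (he : ∀ i, IsIdempotentElem (e i))
    (hsum : ∑ i, e i = 1) (χ : A →+* K) : ∃ i, ∀ j, χ (e j) = if j = i then 1 else 0 := by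
  classical
  have h01 : ∀ j, χ (e j) = 0 ∨ χ (e j) = 1 := fun j =>
    IsIdempotentElem.iff_eq_zero_or_one.1 ((he j).map χ)
  have hcard : #{j | χ (e j) = 1} = 1 := by
    have h : ∑ j, χ (e j) = #{j | χ (e j) = 1} := by
      rw [Finset.natCast_card_filter]
      exact sum_congr rfl fun j _ => by rcases h01 j with h | h <;> simp [h]
    rw [← map_sum, hsum, map_one] at h
    exact_mod_cast h.symm
  obtain ⟨i, hi⟩ := card_eq_one.1 hcard
  refine ⟨i, fun j => ?_⟩
  have hmem : j ∈ ({j | χ (e j) = 1} : Finset ι) ↔ j = i := by rw [hi, mem_singleton]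
  simp only [mem_filter, mem_univ, true_and] at hmem
  split_ifs with hji
  · exact hmem.2 hji
  · exact (h01 j).resolve_right (mt hmem.1 hji)

theorem hammingDist_le_sum_norm_indicator_sub_sq {κ ι : Type*} [Fintype κ] [Fintype ι]
    [DecidableEq ι] (a b : κ → ι) :
    (hammingDist a b : ℝ) ≤
      ∑ i, ∑ k, ‖(if i = a k then 1 else 0 : ℂ) - (if i = b k then 1 else 0)‖ ^ 2 := by
  rw [hammingDist, Finset.natCast_card_filter, Finset.sum_comm]
  refine sum_le_sum fun k _ => ?_
  split_ifs with hk
  · calc (1 : ℝ) = ‖(if a k = a k then 1 else 0 : ℂ) - (if a k = b k then 1 else 0)‖ ^ 2 := by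
          simp [hk]
      _ ≤ _ := single_le_sum (f := fun i => ‖(if i = a k then 1 else 0 : ℂ) -
          (if i = b k then 1 else 0)‖ ^ 2) (fun _ _ => by positivity) (mem_univ (a k))
  · positivity

section SeparationNumbers

variable {Y : Type*} {S : Set Y} {ρ : Y → Y → ℝ}

lemma sepNum_anti {ε ε' : ℝ} (h : ε ≤ ε') : sepNum S ρ ε' ≤ sepNum S ρ ε :=
  iSup₂_le fun t ht =>
    le_iSup₂_of_le t ⟨ht.1, fun x hx y hy hxy => h.trans_lt (ht.2 x hx y hy hxy)⟩ le_rfl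

/-- A maximal `ε`-separated subset of `t` is `ε`-dense in `t`. -/
lemma exists_separated_subset_dense (hcomm : ∀ x y, ρ x y = ρ y x) {ε : ℝ}
    (hself : ∀ x, ρ x x ≤ ε) (t : Finset Y) :
    ∃ B ⊆ t, (∀ x ∈ B, ∀ y ∈ B, x ≠ y → ε < ρ x y) ∧ ∀ a ∈ t, ∃ b ∈ B, ρ a b ≤ ε := by
  obtain ⟨B, ⟨hBt, hB⟩, hBmax⟩ := Set.exists_max_image
    {B : Finset Y | B ⊆ t ∧ ∀ x ∈ B, ∀ y ∈ B, x ≠ y → ε < ρ x y} card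
    (t.powerset.finite_toSet.subset fun B hB => mem_powerset.2 hB.1) ⟨∅, by simp⟩
  refine ⟨B, hBt, hB, fun a ha => ?_⟩
  classical
  by_contra! hfar
  have haB : a ∉ B := fun h => (hself a).not_gt (hfar a h)
  have hins := hBmax (insert a B) <| by
    refine ⟨insert_subset ha hBt, fun x hx y hy hxy => ?_⟩
    rcases mem_insert.1 hx with rfl | hxB <;> rcases mem_insert.1 hy with rfl | hyB
    · exact absurd rfl hxy
    · exact hfar y hyB
    · exact hcomm x _ ▸ hfar x hxB
    · exact hB x hxB y hyB hxy
  rw [card_insert_of_notMem haB] at hins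
  omega

lemma sepNum_zero_le_mul (hcomm : ∀ x y, ρ x y = ρ y x) {ε : ℝ} (hself : ∀ x, ρ x x ≤ ε)
    {K : ℕ} (hK : ∀ t : Finset Y, (∀ x ∈ t, ∀ y ∈ t, x ≠ y → 0 < ρ x y) →
      ∀ b, (∀ a ∈ t, ρ a b ≤ ε) → #t ≤ K) :
    sepNum S ρ 0 ≤ sepNum S ρ ε * K := by
  classical
  refine iSup₂_le fun t ⟨htS, ht⟩ => ?_
  obtain ⟨B, hBt, hB, hdense⟩ := exists_separated_subset_dense hcomm hself t
  have hcover : t ⊆ B.biUnion fun b => t.filter fun a => ρ a b ≤ ε := fun a ha =>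
    let ⟨b, hb, hab⟩ := hdense a ha
    mem_biUnion.2 ⟨b, hb, mem_filter.2 ⟨ha, hab⟩⟩
  have hcard : #t ≤ #B * K :=
    calc #t ≤ ∑ b ∈ B, #(t.filter fun a => ρ a b ≤ ε) :=
          (card_le_card hcover).trans card_biUnion_le
      _ ≤ ∑ _b ∈ B, K := sum_le_sum fun b _ =>
          hK _ (fun x hx y hy => ht x (mem_filter.1 hx).1 y (mem_filter.1 hy).1) b
            fun a ha => (mem_filter.1 ha).2
      _ = #B * K := by rw [sum_const, smul_eq_mul]
  calc (#t : ℕ∞) ≤ #B * K := by exact_mod_cast hcard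
    _ ≤ sepNum S ρ ε * K := by
        gcongr
        exact le_iSup₂_of_le B ⟨(coe_subset.2 hBt).trans htS, hB⟩ le_rfl

end SeparationNumbers

lemma elog_mono_s10 {a b : ℕ∞} (hab : a ≤ b) : elog a ≤ elog b := by
  rcases eq_or_ne b ⊤ with rfl | hb
  · simp [elog]
  rcases eq_or_ne a 0 with rfl | ha
  · simp [elog]
  lift b to ℕ using hb
  lift a to ℕ using ne_top_of_le_ne_top (ENat.natCast_ne_top b) hab
  have hab : a ≤ b := by exact_mod_cast hab
  have ha : a ≠ 0 := by exact_mod_cast ha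
  simpa [elog, ha, show b ≠ 0 by omega] using
    Real.log_le_log (by positivity) (by exact_mod_cast hab)

lemma elog_le_elog_add_log {a b : ℕ∞} {K : ℕ} (h : a ≤ b * K) :
    elog a ≤ elog b + (Real.log K : EReal) := by
  rcases eq_or_ne a 0 with rfl | ha
  · simp [elog]
  rcases eq_or_ne b ⊤ with rfl | hb
  · simp [elog]
  lift b to ℕ using hb
  rw [← Nat.cast_mul] at h
  have hbK : b * K ≠ 0 := by
    rintro hbK
    exact ha (le_antisymm (by simpa [hbK] using h) bot_le)
  calc elog a ≤ elog (b * K : ℕ) := elog_mono_s10 h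
    _ = elog b + (Real.log K : EReal) := by
        obtain ⟨hb, hK⟩ := mul_ne_zero_iff.1 hbK
        rw [elog, elog, if_neg (ENat.natCast_ne_top _), if_neg (ENat.natCast_ne_top _),
          if_neg (Nat.cast_ne_zero.2 hbK), if_neg (Nat.cast_ne_zero.2 hb), ENat.toNat_natCast,
          ENat.toNat_natCast, Nat.cast_mul,
          Real.log_mul (Nat.cast_ne_zero.2 hb) (Nat.cast_ne_zero.2 hK), EReal.coe_add]

lemma limsup_add_coe_le {α : Type*} {f : Filter α} [f.NeBot] (u : α → EReal) (c : ℝ) :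
    limsup (fun i => u i + (c : EReal)) f ≤ limsup u f + (c : EReal) := by
  have h := EReal.limsup_add_le (u := u) (v := fun _ => (c : EReal)) (f := f)
    (.inr (by simp)) (.inr (by simp))
  rwa [limsup_const] at h

open Topology in
lemma iSup_pos_eq_of_le_add_mul {f : ℝ → EReal} (hanti : ∀ ε, 0 < ε → f ε ≤ f 0) (C : ℝ)
    (h : ∀ ε, 0 < ε → ε ≤ 1 → f 0 ≤ f ε + ((C * ε : ℝ) : EReal)) :
    ⨆ ε : {ε : ℝ // 0 < ε}, f ε = f 0 := by
  refine le_antisymm (iSup_le fun ε => hanti ε ε.2) ?_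
  set s := ⨆ ε : {ε : ℝ // 0 < ε}, f ε
  have hlim : Tendsto (fun ε : ℝ => s + ((C * ε : ℝ) : EReal)) (𝓝[>] 0) (𝓝 s) := by
    have h0 : Tendsto (fun ε : ℝ => ((C * ε : ℝ) : EReal)) (𝓝[>] 0) (𝓝 0) :=
      ((continuous_coe_real_ereal.comp (continuous_const_mul C)).tendsto' 0 0 (by simp)).mono_left
        nhdsWithin_le_nhds
    have hadd := EReal.continuousAt_add (p := (s, 0)) (.inr (by simp)) (.inr (by simp))
    simpa only [Function.comp_def, add_zero] using
      hadd.tendsto.comp (tendsto_const_nhds.prodMk_nhds h0)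
  refine ge_of_tendsto hlim ?_
  filter_upwards [Ioc_mem_nhdsGT one_pos] with ε ⟨hε0, hε1⟩
  exact (h ε hε0 hε1).trans (add_le_add (le_iSup (fun ε : {ε // 0 < ε} => f ε) ⟨ε, hε0⟩) le_rfl)

section PartitionPseudometric

variable {n d : ℕ} (P : Fin n → C(X, ℂ))

lemma l2_sq_mul (hd : 0 < d) (v : Fin d → ℂ) : l2 d v ^ 2 * d = ∑ k, ‖v k‖ ^ 2 := by
  rw [l2, Real.sq_sqrt (by positivity), div_mul_cancel₀ _ (by positivity)]

lemma l2_le_rhoPartC (φ ψ : C(X, ℂ) →ₐ[ℂ] (Fin d → ℂ)) (i : Fin n) :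
    l2 d (φ (P i) - ψ (P i)) ≤ rhoPartC P φ ψ :=
  le_ciSup (f := fun j => l2 d (φ (P j) - ψ (P j))) (Set.finite_range _).bddAbove i

lemma rhoPartC_comm (φ ψ : C(X, ℂ) →ₐ[ℂ] (Fin d → ℂ)) : rhoPartC P φ ψ = rhoPartC P ψ φ := by
  simp only [rhoPartC, l2, Pi.sub_apply, norm_sub_rev]

lemma rhoPartC_eq_zero_of_forall_eq {φ ψ : C(X, ℂ) →ₐ[ℂ] (Fin d → ℂ)}
    (h : ∀ i, φ (P i) = ψ (P i)) : rhoPartC P φ ψ = 0 := by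
  simp [rhoPartC, h, l2]

lemma rhoPartC_self (φ : C(X, ℂ) →ₐ[ℂ] (Fin d → ℂ)) : rhoPartC P φ φ = 0 :=
  rhoPartC_eq_zero_of_forall_eq P fun _ => rfl

lemma exists_colouring (hPsum : ∑ i, P i = 1) (hPproj : ∀ i, P i * P i = P i) :
    ∃ c : (C(X, ℂ) →ₐ[ℂ] (Fin d → ℂ)) → Fin d → Fin n,
      ∀ φ i, φ (P i) = fun k => if i = c φ k then 1 else 0 := by
  choose c hc using fun (φ : C(X, ℂ) →ₐ[ℂ] (Fin d → ℂ)) k =>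
    exists_map_eq_ite_of_sum_eq_one hPproj hPsum ((Pi.evalRingHom _ k).comp φ.toRingHom)
  exact ⟨c, fun φ i => funext fun k => hc φ k i⟩

lemma hammingDist_le_of_colouring (hd : 0 < d) {φ ψ : C(X, ℂ) →ₐ[ℂ] (Fin d → ℂ)}
    {a b : Fin d → Fin n} (ha : ∀ i, φ (P i) = fun k => if i = a k then 1 else 0)
    (hb : ∀ i, ψ (P i) = fun k => if i = b k then 1 else 0) :
    (hammingDist a b : ℝ) ≤ n * d * rhoPartC P φ ψ ^ 2 :=
  calc (hammingDist a b : ℝ)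
      ≤ ∑ i, ∑ k, ‖(if i = a k then 1 else 0 : ℂ) - (if i = b k then 1 else 0)‖ ^ 2 :=
        hammingDist_le_sum_norm_indicator_sub_sq a b
    _ = ∑ i, l2 d (φ (P i) - ψ (P i)) ^ 2 * d := by simp [l2_sq_mul hd, ha, hb]
    _ ≤ ∑ _i : Fin n, rhoPartC P φ ψ ^ 2 * d :=
        sum_le_sum fun i _ => by
          gcongr
          · exact Real.sqrt_nonneg _
          · exact l2_le_rhoPartC P φ ψ i
    _ = n * d * rhoPartC P φ ψ ^ 2 := by
        rw [sum_const, card_univ, Fintype.card_fin, nsmul_eq_mul]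
        ring

/-- The colourings of the members of `t` are distinct and lie in a Hamming ball of radius
`n ε² d`. -/
lemma card_le_exp_of_rhoPartC_le (hPsum : ∑ i, P i = 1) (hPproj : ∀ i, P i * P i = P i)
    (hd : 0 < d) {ε : ℝ} (hε0 : 0 < ε) (hε1 : ε ≤ 1) (t : Finset (C(X, ℂ) →ₐ[ℂ] (Fin d → ℂ)))
    (ht : ∀ x ∈ t, ∀ y ∈ t, x ≠ y → 0 < rhoPartC P x y) (b : C(X, ℂ) →ₐ[ℂ] (Fin d → ℂ))
    (htb : ∀ a ∈ t, rhoPartC P a b ≤ ε) :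
    (#t : ℝ) ≤ Real.exp (2 * n * ε * d) := by
  classical
  obtain ⟨c, hc⟩ := exists_colouring P hPsum hPproj (d := d)
  set m := ⌊n * ε ^ 2 * d⌋₊
  have hinj : Set.InjOn c t := by
    intro x hx y hy hxy
    by_contra hne
    have hpos := ht x hx y hy hne
    rw [rhoPartC_eq_zero_of_forall_eq P fun i => by rw [hc, hc, hxy]] at hpos
    exact lt_irrefl _ hpos
  have hmaps : ∀ a ∈ t, c a ∈ ({g | hammingDist g (c b) ≤ m} : Finset (Fin d → Fin n)) := by
    intro a ha
    refine mem_filter.2 ⟨mem_univ _, Nat.le_floor ?_⟩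
    calc (hammingDist (c a) (c b) : ℝ) ≤ n * d * rhoPartC P a b ^ 2 :=
          hammingDist_le_of_colouring P hd (hc a) (hc b)
      _ ≤ n * d * ε ^ 2 := by
          gcongr
          · exact Real.iSup_nonneg fun _ => Real.sqrt_nonneg _
          · exact htb a ha
      _ = n * ε ^ 2 * d := by ring
  have hm : (m : ℝ) / ε ≤ n * ε * d := by
    rw [div_le_iff₀ hε0]
    calc (m : ℝ) ≤ n * ε ^ 2 * d := Nat.floor_le (by positivity)
      _ = n * ε * d * ε := by ring
  calc (#t : ℝ) ≤ #({g | hammingDist g (c b) ≤ m} : Finset (Fin d → Fin n)) := by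
        exact_mod_cast card_le_card_of_injOn c hmaps hinj
    _ ≤ Real.exp (n * ε * d + m / ε) := by
        simpa using card_hammingBall_le_exp (c b) m hε0 hε1
    _ ≤ Real.exp (2 * n * ε * d) := by
        gcongr
        linarith

lemma inv_mul_elog_sepNum_zero_le (hPsum : ∑ i, P i = 1) (hPproj : ∀ i, P i * P i = P i)
    (hd : 0 < d) {ε : ℝ} (hε0 : 0 < ε) (hε1 : ε ≤ 1)
    (S : Set (C(X, ℂ) →ₐ[ℂ] (Fin d → ℂ))) :
    (((d : ℝ)⁻¹ : ℝ) : EReal) * elog (sepNum S (rhoPartC P) 0) ≤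
      (((d : ℝ)⁻¹ : ℝ) : EReal) * elog (sepNum S (rhoPartC P) ε) + ((2 * n * ε : ℝ) : EReal) := by
  set K := ⌊Real.exp (2 * n * ε * d)⌋₊
  have hN : sepNum S (rhoPartC P) 0 ≤ sepNum S (rhoPartC P) ε * K :=
    sepNum_zero_le_mul (rhoPartC_comm P) (fun φ => (rhoPartC_self P φ).trans_le hε0.le)
      fun t ht b htb =>
        Nat.le_floor (card_le_exp_of_rhoPartC_le P hPsum hPproj hd hε0 hε1 t ht b htb)
  have hK : Real.log K ≤ 2 * n * ε * d := by
    have hK1 : 1 ≤ K := Nat.one_le_floor_iff _ |>.2 (Real.one_le_exp (by positivity))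
    calc Real.log K ≤ Real.log (Real.exp (2 * n * ε * d)) :=
          Real.log_le_log (by exact_mod_cast hK1) (Nat.floor_le (by positivity))
      _ = 2 * n * ε * d := Real.log_exp _
  have hdinv : (0 : EReal) ≤ ((d : ℝ)⁻¹ : ℝ) := EReal.coe_nonneg.2 (by positivity)
  calc _ ≤ (((d : ℝ)⁻¹ : ℝ) : EReal) * (elog (sepNum S (rhoPartC P) ε) + (Real.log K : EReal)) :=
        mul_le_mul_of_nonneg_left (elog_le_elog_add_log hN) hdinv
    _ = (((d : ℝ)⁻¹ : ℝ) : EReal) * elog (sepNum S (rhoPartC P) ε) +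
          (((d : ℝ)⁻¹ * Real.log K : ℝ) : EReal) := by
        rw [EReal.left_distrib_of_nonneg_of_ne_top hdinv (EReal.coe_ne_top _), EReal.coe_mul]
    _ ≤ _ := by
        refine add_le_add le_rfl (EReal.coe_le_coe_iff.2 ?_)
        rw [inv_mul_le_iff₀ (by positivity)]
        linarith

end PartitionPseudometric

def hTopPAt (T : G → X → X) (hc : ∀ s, Continuous (T s)) (SA : SoficApprox G) {n : ℕ}
    (P : Fin n → C(X, ℂ)) (ε : ℝ) : EReal :=
  ⨅ F : {F : Finset G // F.Nonempty}, ⨅ δ : {δ : ℝ // 0 < δ},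
    limsup (fun i => ((((SA.d i : ℝ))⁻¹ : ℝ) : EReal) *
      elog (sepNum (HomTopP T hc P (F : Finset G) (δ : ℝ) (SA.σ i)) (rhoPartC P) ε)) atTop

section EntropyAtScale

variable (T : G → X → X) (hc : ∀ s, Continuous (T s)) (SA : SoficApprox G) {n : ℕ}
  (P : Fin n → C(X, ℂ))

lemma hTopP_eq_iSup_hTopPAt : hTopP T hc SA P = ⨆ ε : {ε : ℝ // 0 < ε}, hTopPAt T hc SA P ε :=
  rfl

lemma hTopPAt_anti {ε ε' : ℝ} (h : ε ≤ ε') : hTopPAt T hc SA P ε' ≤ hTopPAt T hc SA P ε :=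
  iInf₂_mono fun F δ => limsup_le_limsup <| .of_forall fun i =>
    mul_le_mul_of_nonneg_left (elog_mono_s10 (sepNum_anti h)) (EReal.coe_nonneg.2 (by positivity))

lemma hTopPAt_zero_le (hPsum : ∑ i, P i = 1) (hPproj : ∀ i, P i * P i = P i) {ε : ℝ}
    (hε0 : 0 < ε) (hε1 : ε ≤ 1) :
    hTopPAt T hc SA P 0 ≤ hTopPAt T hc SA P ε + ((2 * n * ε : ℝ) : EReal) := by
  rw [← EReal.sub_le_iff_le_add (.inl (EReal.coe_ne_bot _)) (.inl (EReal.coe_ne_top _))]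
  refine le_iInf₂ fun F δ => ?_
  rw [EReal.sub_le_iff_le_add (.inl (EReal.coe_ne_bot _)) (.inl (EReal.coe_ne_top _))]
  refine (iInf₂_le F δ).trans <| (limsup_le_limsup <| .of_forall fun i => ?_).trans
    (limsup_add_coe_le _ _)
  exact inv_mul_elog_sepNum_zero_le P hPsum hPproj (SA.d_pos i) hε0 hε1 _

end EntropyAtScale

theorem stmt10_general
    {X : Type*} [TopologicalSpace X]
    {G : Type*} [Group G]
    (T : G → X → X) (hc : ∀ s : G, Continuous (T s))
    (SA : SoficApprox G)
    {n : ℕ} (P : Fin n → C(X, ℂ))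
    (hPsum : ∑ i, P i = 1)
    (hPproj : ∀ i, P i * P i = P i) :
    hTopP T hc SA P =
      ⨅ F : {F : Finset G // F.Nonempty}, ⨅ δ : {δ : ℝ // 0 < δ},
        limsup (fun i => ((((SA.d i : ℝ))⁻¹ : ℝ) : EReal) *
          elog (sepNum (HomTopP T hc P (F : Finset G) (δ : ℝ) (SA.σ i)) (rhoPartC P) 0))
          atTop := by
  rw [hTopP_eq_iSup_hTopPAt]
  exact iSup_pos_eq_of_le_add_mul (fun ε hε => hTopPAt_anti T hc SA P hε.le) (2 * n)
    fun ε hε0 hε1 => hTopPAt_zero_le T hc SA P hPsum hPproj hε0 hε1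

/-- Proposition 4.10 (`P-card top`): for a finite partition of unity `P` in `C(X)`
consisting of projections,
`h_Σ(P) = inf_F inf_{δ>0} limsup_i (1/d_i) log N_0(Hom(P,F,δ,σ_i), ρ_P)`. -/
theorem stmt10
    {X : Type*} [TopologicalSpace X] [CompactSpace X] [TopologicalSpace.MetrizableSpace X]
    {G : Type*} [Group G] [Countable G]
    (T : G → X → X) (hc : ∀ s : G, Continuous (T s))
    (hT1 : T 1 = id) (hTmul : ∀ s t : G, T (s * t) = T s ∘ T t)
    (SA : SoficApprox G)
    {n : ℕ} (P : Fin n → C(X, ℂ))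
    (hPpos : ∀ i x, 0 ≤ P i x) (hPsum : ∑ i, P i = 1)
    (hPproj : ∀ i, P i * P i = P i) :
    hTopP T hc SA P =
      ⨅ F : {F : Finset G // F.Nonempty}, ⨅ δ : {δ : ℝ // 0 < δ},
        limsup (fun i => ((((SA.d i : ℝ))⁻¹ : ℝ) : EReal) *
          elog (sepNum (HomTopP T hc P (F : Finset G) (δ : ℝ) (SA.σ i)) (rhoPartC P) 0))
          atTop :=
  stmt10_general T hc SA P hPsum hPproj

end Sofic
end
end
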